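/- In the quasi-staircase subshift, the set of right-special words decomposes as follows: the sets W_n (n ≥ 1) are pairwise disjoint; every right-special word containing at least one 0 belongs to some W_n; every word of the form 1^ℓ (ℓ ≥ 1) is right-special; and no word 1^ℓ belongs to any W_n. -/

import Mathlib

open Filter MeasureTheory
open scoped ENNReal

/-- `n`-fold concatenation (power) of a word. -/
def wpow {α : Type*} (v : List α) (n : ℕ) : List α := (List.replicate n v).flatten

/-- The word `1^k` over the alphabet `{0,1}` (with `0 = false`, `1 = true`). -/
def ones (k : ℕ) : List Bool := List.replicate k true

/-- The left shift on biinfinite sequences. -/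
def shift {A : Type*} (x : ℤ → A) : ℤ → A := fun n => x (n + 1)

/-- The word `x_{[s, s+len)}` read off a biinfinite sequence. -/
def readWord {A : Type*} (x : ℤ → A) (s : ℤ) (len : ℕ) : List A :=
  (List.range len).map (fun i => x (s + (i : ℤ)))

/-- A finite word occurs (as a consecutive subword) in a biinfinite sequence. -/
def occursIn {A : Type*} (w : List A) (x : ℤ → A) : Prop :=
  ∃ k : ℤ, readWord x k w.length = w

/-- The quasi-staircase words: `B 1 = 0` and
`B (n+1) = (∏_{i=0}^{b n - 1} (B n · 1^{c n + i})^{a n}) · B n`. -/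
def qsB (a b c : ℕ → ℕ) : ℕ → List Bool
  | 0 => []
  | 1 => [false]
  | (n+2) =>
      ((List.range (b (n+1))).map
        (fun i => wpow (qsB a b c (n+1) ++ ones (c (n+1) + i)) (a (n+1)))).flatten
        ++ qsB a b c (n+1)

/-- The language of the quasi-staircase subshift: all subwords of some `B n`, `n ≥ 1`. -/
def qsL (a b c : ℕ → ℕ) : Set (List Bool) :=
  {w | ∃ n, 1 ≤ n ∧ w <:+: qsB a b c n}

/-- The quasi-staircase subshift: biinfinite sequences all of whose finite subwords
lie in the language. -/
def qsX (a b c : ℕ → ℕ) : Set (ℤ → Bool) :=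
  {x | ∀ w : List Bool, occursIn w x → w ∈ qsL a b c}

/-- Right-special words of the quasi-staircase subshift: `w`, `w0` and `w1` all lie
in the language. -/
def RS (a b c : ℕ → ℕ) (w : List Bool) : Prop :=
  w ∈ qsL a b c ∧ (w ++ [false]) ∈ qsL a b c ∧ (w ++ [true]) ∈ qsL a b c

/-- The tail length `z(w)`: the number of `1`s at the end of `w`. -/
def ztail (w : List Bool) : ℕ := (w.reverse.takeWhile id).length

/-- The level-`n` generating words: right-special words containing a `0` whose tail
length lies in `[c n, c (n+1))`. -/
def Wn (a b c : ℕ → ℕ) (n : ℕ) : Set (List Bool) :=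
  {w | RS a b c w ∧ false ∈ w ∧ c n ≤ ztail w ∧ ztail w < c (n+1)}

/-- The word complexity of the quasi-staircase subshift. -/
noncomputable def cplx (a b c : ℕ → ℕ) (q : ℕ) : ℕ :=
  Set.ncard {w | w ∈ qsL a b c ∧ w.length = q}

/-- The level-`n` complexity functions. -/
noncomputable def cplxn (a b c : ℕ → ℕ) (n q : ℕ) : ℕ :=
  Set.ncard {w | w ∈ Wn a b c n ∧ w.length < q}

/-- The height sequence of the quasi-staircase: `h n = |B n|`. -/
def qsh (a b c : ℕ → ℕ) : ℕ → ℕ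
  | 0 => 0
  | 1 => 1
  | (n+2) => (a (n+1) * b (n+1) + 1) * qsh a b c (n+1)
      + a (n+1) * b (n+1) * c (n+1) + a (n+1) * b (n+1) * (b (n+1) - 1) / 2

/-- The post-productive sequence `m n = a n * h n + (a n + 1) * (c n + b n - 1)`. -/
def qsm (a b c : ℕ → ℕ) (n : ℕ) : ℕ :=
  a n * qsh a b c n + (a n + 1) * (c n + b n - 1)

/-- The standing quasi-staircase hypotheses: `a`, `b`, `c` are nondecreasing sequences
of positive integers (for `n ≥ 1`) tending to infinity, with `c 1 ≥ 1` and
`c (n+1) ≥ c n + b n` for all `n ≥ 1`. -/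
def QShyp (a b c : ℕ → ℕ) : Prop :=
  (∀ n, 1 ≤ n → 1 ≤ a n ∧ a n ≤ a (n+1)) ∧ Tendsto a atTop atTop ∧
  (∀ n, 1 ≤ n → 1 ≤ b n ∧ b n ≤ b (n+1)) ∧ Tendsto b atTop atTop ∧
  (∀ n, 1 ≤ n → 1 ≤ c n ∧ c n ≤ c (n+1)) ∧ Tendsto c atTop atTop ∧
  (∀ n, 1 ≤ n → c n + b n ≤ c (n+1))

/-! The tail length `z(w)` of a right-special word `w` containing a `0` is the length of a gap
`0 1^z 0` between two consecutive zeros of some `B m` (read off `w0`), and every such gap has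
length at least `c 1`; as `c` is nondecreasing and unbounded, `z(w)` falls in exactly one window
`[c n, c (n+1))`. Conversely `B (n+1)` ends with `1^{c n + b n - 1} B n` and `B n` begins with `0`,
so `1^{K} 0` is in the language for arbitrarily large `K`, which makes every `1^ℓ` right-special. -/

lemma MonotoneOn.eq_of_mem_Ico_of_mem_Ico {α : Type*} [LinearOrder α] {f : ℕ → α} {k n n' : ℕ}
    (hf : MonotoneOn f {m | k ≤ m}) (hn : k ≤ n) (hn' : k ≤ n') {x : α}
    (hx : x ∈ Set.Ico (f n) (f (n + 1))) (hx' : x ∈ Set.Ico (f n') (f (n' + 1))) : n = n' := by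
  by_contra hne
  rcases Nat.lt_or_gt_of_ne hne with h | h
  · exact (hx.2.trans_le (hf (show k ≤ n + 1 by omega) hn' h)).not_ge hx'.1
  · exact (hx'.2.trans_le (hf (show k ≤ n' + 1 by omega) hn h)).not_ge hx.1

lemma Filter.Tendsto.exists_le_lt_succ {α : Type*} [LinearOrder α] [NoMaxOrder α] {f : ℕ → α}
    (hf : Tendsto f atTop atTop) {k : ℕ} {x : α} (hx : f k ≤ x) :
    ∃ n, k ≤ n ∧ f n ≤ x ∧ x < f (n + 1) := by
  have hex : ∃ m, x < f (k + m + 1) := by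
    obtain ⟨N, hN⟩ := (hf.eventually_gt_atTop x).exists_forall_of_atTop
    exact ⟨N, hN _ (by omega)⟩
  have hspec := Nat.find_spec hex
  match h : Nat.find hex with
  | 0 => exact ⟨k, le_rfl, hx, by simpa [h] using hspec⟩
  | j + 1 =>
    refine ⟨k + j + 1, by omega, not_lt.1 (Nat.find_min hex (by omega : j < Nat.find hex)), ?_⟩
    rwa [h] at hspec

lemma wpow_succ {α : Type*} (v : List α) (n : ℕ) : wpow v (n + 1) = v ++ wpow v n := by
  simp [wpow, List.replicate_succ]

lemma wpow_succ' {α : Type*} (v : List α) (n : ℕ) : wpow v (n + 1) = wpow v n ++ v := by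
  simp [wpow, List.replicate_succ']

lemma ones_succ (k : ℕ) : ones (k + 1) = true :: ones k := rfl

lemma ones_succ' (k : ℕ) : ones (k + 1) = ones k ++ [true] := List.replicate_succ'

lemma ones_add (m n : ℕ) : ones (m + n) = ones m ++ ones n := List.replicate_add m n true

lemma false_notMem_ones (k : ℕ) : false ∉ ones k := by simp [ones]

lemma le_of_ones_append_false_prefix {z j : ℕ} {l : List Bool}
    (h : ones z ++ [false] <+: ones j ++ l) : j ≤ z := by
  induction z generalizing j with
  | zero =>
    cases j with
    | zero => rfl
    | succ j => simp [ones, List.replicate_succ] at h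
  | succ z ih =>
    cases j with
    | zero => omega
    | succ j =>
      rw [ones_succ, ones_succ] at h
      simpa using ih (List.cons_prefix_cons.1 h).2

lemma infix_of_false_cons_infix_ones_append {q l : List Bool} {j : ℕ}
    (h : false :: q <:+: ones j ++ l) : false :: q <:+: l := by
  induction j with
  | zero => simpa [ones] using h
  | succ j ih =>
    rw [ones_succ, List.cons_append, List.infix_cons_iff] at h
    exact h.elim (fun hp => by simp at hp) ih

lemma ztail_append_false (w : List Bool) : ztail (w ++ [false]) = 0 := by
  simp [ztail]

lemma ztail_append_true (w : List Bool) : ztail (w ++ [true]) = ztail w + 1 := by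
  simp [ztail]

lemma exists_eq_append_false_cons_ones_ztail {w : List Bool} (hw : false ∈ w) :
    ∃ u, w = u ++ false :: ones (ztail w) := by
  induction w using List.reverseRecOn with
  | nil => simp at hw
  | append_singleton w x ih =>
    cases x with
    | false => exact ⟨w, by simp [ztail_append_false, ones]⟩
    | true =>
      obtain ⟨u, hu⟩ := ih (by simpa using hw)
      refine ⟨u, ?_⟩
      rw [ztail_append_true, ones_succ']
      nth_rw 1 [hu]
      simp

inductive IsGapChain (k : ℕ) : List Bool → Prop
  | single : IsGapChain k [false]
  | cons {j : ℕ} {l : List Bool} : k ≤ j → IsGapChain k l → IsGapChain k (false :: (ones j ++ l))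

namespace IsGapChain

variable {k : ℕ}

lemma exists_eq_false_cons {l : List Bool} (h : IsGapChain k l) : ∃ t, l = false :: t := by
  cases h with
  | single => exact ⟨[], rfl⟩
  | cons => exact ⟨_, rfl⟩

lemma append {j : ℕ} {l l' : List Bool} (h : IsGapChain k l) (h' : IsGapChain k l')
    (hj : k ≤ j) : IsGapChain k (l ++ ones j ++ l') := by
  induction h with
  | single => exact cons hj h'
  | cons hi _ ih => simpa using cons hi ih

lemma wpow_append {j : ℕ} {d e : List Bool} (hd : IsGapChain k d) (he : IsGapChain k e)
    (hj : k ≤ j) (A : ℕ) : IsGapChain k (wpow (d ++ ones j) A ++ e) := by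
  induction A with
  | zero => simpa [wpow] using he
  | succ A ih => simpa [wpow_succ] using hd.append ih hj

lemma flatten_map_wpow_append {A : ℕ} {g : ℕ → ℕ} {d e : List Bool} (hd : IsGapChain k d)
    (he : IsGapChain k e) {is : List ℕ} (hg : ∀ i ∈ is, k ≤ g i) :
    IsGapChain k ((is.map fun i => wpow (d ++ ones (g i)) A).flatten ++ e) := by
  induction is with
  | nil => simpa using he
  | cons i is ih =>
    simpa using hd.wpow_append (ih fun i hi => hg i (List.mem_cons_of_mem _ hi))
      (hg i List.mem_cons_self) A

lemma le_of_infix {l : List Bool} {z : ℕ} (h : IsGapChain k l)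
    (hz : false :: (ones z ++ [false]) <:+: l) : k ≤ z := by
  induction h with
  | single => simpa [ones] using hz.length_le
  | cons hj _ ih =>
    rcases List.infix_cons_iff.1 hz with hp | hi
    · exact hj.trans (le_of_ones_append_false_prefix (List.cons_prefix_cons.1 hp).2)
    · exact ih (infix_of_false_cons_infix_ones_append hi)

end IsGapChain

section QuasiStaircase

variable {a b c : ℕ → ℕ}

lemma qsB_succ {n : ℕ} (hn : 1 ≤ n) : qsB a b c (n + 1) =
    ((List.range (b n)).map fun i => wpow (qsB a b c n ++ ones (c n + i)) (a n)).flatten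
      ++ qsB a b c n := by
  obtain ⟨m, rfl⟩ := Nat.exists_eq_add_of_le' hn
  rfl

lemma isGapChain_qsB {k : ℕ} (hk : ∀ m, 1 ≤ m → k ≤ c m) {n : ℕ} (hn : 1 ≤ n) :
    IsGapChain k (qsB a b c n) := by
  induction n, hn using Nat.le_induction with
  | base => exact IsGapChain.single
  | succ n hn ih =>
    rw [qsB_succ hn]
    exact ih.flatten_map_wpow_append ih fun i _ => (hk n hn).trans (Nat.le_add_right _ _)

lemma ones_append_qsB_suffix_qsB_succ {n : ℕ} (hn : 1 ≤ n) (ha : 1 ≤ a n) (hb : 1 ≤ b n) :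
    ones (c n + (b n - 1)) ++ qsB a b c n <:+ qsB a b c (n + 1) := by
  obtain ⟨b', hb'⟩ := Nat.exists_eq_add_of_le' hb
  obtain ⟨a', ha'⟩ := Nat.exists_eq_add_of_le' ha
  rw [qsB_succ hn, hb', List.range_succ, List.map_append, List.flatten_append, List.map_singleton,
    List.flatten_singleton, ha', wpow_succ', Nat.add_sub_cancel]
  simp only [List.append_assoc]
  exact ((List.suffix_append _ _).trans (List.suffix_append _ _)).trans (List.suffix_append _ _)

lemma mem_qsL_of_infix {w w' : List Bool} (h : w <:+: w') (hw' : w' ∈ qsL a b c) :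
    w ∈ qsL a b c :=
  let ⟨n, hn, hw'n⟩ := hw'
  ⟨n, hn, h.trans hw'n⟩

lemma ones_append_false_mem_qsL {n : ℕ} (hn : 1 ≤ n) (ha : 1 ≤ a n) (hb : 1 ≤ b n) :
    ones (c n + (b n - 1)) ++ [false] ∈ qsL a b c := by
  obtain ⟨t, ht⟩ := (isGapChain_qsB (k := 0) (fun _ _ => Nat.zero_le _) hn).exists_eq_false_cons
  refine ⟨n + 1, by omega, List.IsInfix.trans ?_ (ones_append_qsB_suffix_qsB_succ hn ha hb).isInfix⟩
  rw [ht]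
  exact ⟨[], t, by simp⟩

lemma rs_ones_of_lt {ℓ K : ℕ} (h : ones K ++ [false] ∈ qsL a b c) (hℓ : ℓ < K) :
    RS a b c (ones ℓ) := by
  have hfalse : ones ℓ ++ [false] ∈ qsL a b c := by
    refine mem_qsL_of_infix ?_ h
    rw [show K = K - ℓ + ℓ by omega, ones_add, List.append_assoc]
    exact (List.suffix_append _ _).isInfix
  refine ⟨mem_qsL_of_infix (List.prefix_append _ _).isInfix hfalse, hfalse,
    mem_qsL_of_infix ?_ h⟩
  rw [← ones_succ' ℓ, show K = ℓ + 1 + (K - (ℓ + 1)) by omega, ones_add (ℓ + 1), List.append_assoc]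
  exact (List.prefix_append _ _).isInfix

lemma le_ztail_of_append_false_mem_qsL {k : ℕ} (hk : ∀ m, 1 ≤ m → k ≤ c m) {w : List Bool}
    (hw : false ∈ w) (h : w ++ [false] ∈ qsL a b c) : k ≤ ztail w := by
  obtain ⟨n, hn, hinf⟩ := h
  obtain ⟨u, hu⟩ := exists_eq_append_false_cons_ones_ztail hw
  refine (isGapChain_qsB hk hn).le_of_infix (List.IsInfix.trans ?_ hinf)
  generalize ztail w = z at hu ⊢
  subst hu
  exact ⟨u, [], by simp⟩

end QuasiStaircase

/-- The decomposition of the right-special words of the quasi-staircase subshift: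
the sets `W n` (`n ≥ 1`) are pairwise disjoint; every right-special word containing a
`0` lies in some `W n` with `n ≥ 1`; every `1^ℓ` (`ℓ ≥ 1`) is right-special; and no
`1^ℓ` lies in any `W n`. -/
theorem qs_right_special_decomposition (a b c : ℕ → ℕ) (hQS : QShyp a b c) :
    (∀ n n' : ℕ, 1 ≤ n → 1 ≤ n' →
      ∀ w : List Bool, w ∈ Wn a b c n → w ∈ Wn a b c n' → n = n') ∧
    (∀ w : List Bool, RS a b c w → false ∈ w → ∃ n, 1 ≤ n ∧ w ∈ Wn a b c n) ∧
    (∀ ℓ : ℕ, 1 ≤ ℓ → RS a b c (ones ℓ)) ∧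
    (∀ ℓ n : ℕ, ones ℓ ∉ Wn a b c n) := by
  obtain ⟨hA, -, hB, -, hC, hCt, -⟩ := hQS
  have hcmono : MonotoneOn c {m | 1 ≤ m} :=
    monotoneOn_nat_Ici_of_le_succ fun n hn => (hC n hn).2
  refine ⟨?_, ?_, ?_, ?_⟩
  · intro n n' hn hn' w hw hw'
    exact hcmono.eq_of_mem_Ico_of_mem_Ico hn hn' ⟨hw.2.2.1, hw.2.2.2⟩ ⟨hw'.2.2.1, hw'.2.2.2⟩
  · intro w hRS hw
    have hc1 : c 1 ≤ ztail w :=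
      le_ztail_of_append_false_mem_qsL (fun m hm => hcmono (le_refl 1) hm hm) hw hRS.2.1
    obtain ⟨n, hn, hlo, hhi⟩ := hCt.exists_le_lt_succ hc1
    exact ⟨n, hn, hRS, hw, hlo, hhi⟩
  · intro ℓ _
    obtain ⟨n, hℓ, hn⟩ := ((hCt.eventually_gt_atTop ℓ).and (eventually_ge_atTop 1)).exists
    exact rs_ones_of_lt (ones_append_false_mem_qsL hn (hA n hn).1 (hB n hn).1) (by omega)
  · intro ℓ n hw
    exact false_notMem_ones ℓ hw.2.1
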